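/- Let (Γ, α) be an abstract GKM₃ graph with a quaternionic structure. Then every complex 2-face of Γ admits a compatible signed structure: if g₁, …, g_N are the edges of the complex 2-face (indices modulo N, with t(g_k) = i(g_{k+1})), then there exist lifts γ_k ∈ ℤ^m of α(g_k) such that for every k one has γ_{k+1} + γ_{k−1} ∈ ℤ·γ_k, and the lifts −γ_k and γ_{k+1} of the labels of the two face edges based at the vertex t(g_k) are quaternionically compatible at t(g_k). -/

import Mathlib

namespace GKMQ

/-- `x` equals `y` up to sign (`x` is a "lift" of the class of `y` mod sign). -/
def PM {m : ℕ} (x y : Fin m → ℤ) : Prop := x = y ∨ x = -y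

/-- coefficientwise coercion of an integer vector to `ℚ`. -/
def ratQ {m : ℕ} (x : Fin m → ℤ) : Fin m → ℚ := fun i => (x i : ℚ)

/-- An abstract graph: finite vertex and oriented-edge sets, a fixed-point-free
orientation-reversal involution `bar`, no loops; multiple edges are allowed. -/
structure Graph where
  V : Type
  E : Type
  fintypeV : Fintype V
  fintypeE : Fintype E
  src : E → V
  bar : E → E
  bar_invol : ∀ e, bar (bar e) = e
  bar_ne : ∀ e, bar e ≠ e
  no_loop : ∀ e, src (bar e) ≠ src e

/-- The terminal vertex of an oriented edge. -/
def Graph.tgt (G : Graph) (e : G.E) : G.V := G.src (G.bar e)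

/-- A connection on a graph; `map e` is a bijection `E_{i(e)} → E_{t(e)}` with
`∇_e e = ē` and `∇_{ē} = (∇_e)⁻¹` (its values outside `E_{i(e)}` are irrelevant). -/
structure Connection (G : Graph) where
  map : G.E → G.E → G.E
  map_src : ∀ e f, G.src f = G.src e → G.src (map e f) = G.tgt e
  map_self : ∀ e, map e e = G.bar e
  map_bar : ∀ e f, G.src f = G.src e → map (G.bar e) (map e f) = f

/-- Compatibility of a connection with an edge labeling (mod sign): for every edge `e`
and `f ∈ E_{i(e)}` there are lifts of the labels of `f` and `∇_e f` differing by an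
integer multiple of the label of `e`. -/
def CompatibleConn (G : Graph) {m : ℕ} (label : G.E → (Fin m → ℤ)) (C : Connection G) :
    Prop :=
  ∀ e f, G.src f = G.src e →
    ∃ x y : Fin m → ℤ, PM x (label f) ∧ PM y (label (C.map e f)) ∧
      ∃ c : ℤ, y = x + c • label e

/-- An axial function with values in `ℤ^m` modulo sign; `label` is a choice of
representatives, so that all labels are well defined up to sign. -/
structure Axial (G : Graph) (m : ℕ) where
  label : G.E → (Fin m → ℤ)
  label_bar : ∀ e, PM (label (G.bar e)) (label e)
  indep₂ : ∀ e f, G.src f = G.src e → e ≠ f →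
    LinearIndependent ℚ ![ratQ (label e), ratQ (label f)]
  exists_compat : ∃ C : Connection G, CompatibleConn G label C

/-- The GKM_k condition: at every vertex, any `k` of the labels are linearly
independent over `ℚ`. -/
def Axial.IsGKM {G : Graph} {m : ℕ} (A : Axial G m) (k : ℕ) : Prop :=
  ∀ v : G.V, ∀ s : Finset G.E, (∀ e ∈ s, G.src e = v) → s.card = k →
    LinearIndependent ℚ (fun e : {x // x ∈ s} => ratQ (A.label e.1))

/-- A full quaternionically compatible family of lifts at a vertex `v`: `L` assigns to
every edge at `v` a lift of its label, `ℓ` is a lift of the quaternionic weight, and the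
lifts of each quaternionic pair sum to `ℓ`. -/
def QFam (G : Graph) {m : ℕ} (label : G.E → (Fin m → ℤ)) (lam : G.V → (Fin m → ℤ))
    (qpair : G.E → G.E) (v : G.V) (L : G.E → (Fin m → ℤ)) (ℓ : Fin m → ℤ) : Prop :=
  PM ℓ (lam v) ∧ ∀ e, G.src e = v → PM (L e) (label e) ∧ L e + L (qpair e) = ℓ

/-- A partial family `s` of lifts, together with a lift `ℓ` of the quaternionic weight
at `v`, is quaternionically compatible if it extends to a full family. -/
def QCompat (G : Graph) {m : ℕ} (label : G.E → (Fin m → ℤ)) (lam : G.V → (Fin m → ℤ))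
    (qpair : G.E → G.E) (v : G.V) (s : List (G.E × (Fin m → ℤ))) (ℓ : Fin m → ℤ) :
    Prop :=
  ∃ L, QFam G label lam qpair v L ℓ ∧ ∀ p ∈ s, L p.1 = p.2

/-- Condition (2) in the definition of a quaternionic structure on a GKM graph. -/
def QuatCondTwo (G : Graph) {m : ℕ} (label : G.E → (Fin m → ℤ))
    (lam : G.V → (Fin m → ℤ)) (qpair : G.E → G.E) : Prop :=
  ∃ C : Connection G, CompatibleConn G label C ∧
    (∀ e f, G.src f = G.src e → C.map e (qpair f) = qpair (C.map e f)) ∧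
    ∀ e xe lv, QCompat G label lam qpair (G.src e) [(e, xe)] lv →
      ∃ lw, (∃ c : ℤ, lw = lv + c • label e) ∧
        QCompat G label lam qpair (G.tgt e) [(G.bar e, -xe)] lw ∧
        ∀ f, G.src f = G.src e → ∀ xf,
          QCompat G label lam qpair (G.src e) [(e, xe), (f, xf)] lv →
          ∀ y, PM y (label (C.map e f)) → (∃ c : ℤ, y = xf + c • label e) →
            QCompat G label lam qpair (G.tgt e) [(G.bar e, -xe), (C.map e f, y)] lw

/-- A quaternionic structure on an abstract GKM graph: a quaternionic weight (mod sign)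
at every vertex, and a grouping of the edges at each vertex into quaternionic pairs,
subject to conditions (1) (`pair_sum`) and (2) (`cond₂`). -/
structure QuatStructure (G : Graph) {m : ℕ} (A : Axial G m) where
  lam : G.V → (Fin m → ℤ)
  qpair : G.E → G.E
  qpair_src : ∀ e, G.src (qpair e) = G.src e
  qpair_ne : ∀ e, qpair e ≠ e
  qpair_invol : ∀ e, qpair (qpair e) = e
  pair_sum : ∀ e, ∃ x y : Fin m → ℤ, PM x (A.label e) ∧ PM y (A.label (qpair e)) ∧
    PM (x + y) (lam (G.src e))
  cond₂ : QuatCondTwo G A.label lam qpair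

/-- Auxiliary function: consecutive pairs of edges of a connection path. -/
def connAux (G : Graph) (C : Connection G) (e₁ e₂ : G.E) : ℕ → G.E × G.E
  | 0 => (e₁, e₂)
  | n + 1 =>
    let p := connAux G C e₁ e₂ n
    (p.2, C.map p.2 (G.bar p.1))

/-- The connection path with prescribed first two edges `e₁, e₂` (where `t(e₁) = i(e₂)`):
`g 0 = e₁`, `g 1 = e₂`, `g (k+2) = ∇_{g (k+1)} (bar (g k))`. -/
def connPathFrom (G : Graph) (C : Connection G) (e₁ e₂ : G.E) (k : ℕ) : G.E :=
  (connAux G C e₁ e₂ k).1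

/-- The connection path through two edges `e, f` starting at the same vertex:
`g 0 = e`, `g 1 = ∇_e f`, `g (k+2) = ∇_{g (k+1)} (bar (g k))`. -/
def connPath (G : Graph) (C : Connection G) (e f : G.E) : ℕ → G.E :=
  connPathFrom G C e (C.map e f)

def IsPeriod {α : Type*} (g : ℕ → α) (N : ℕ) : Prop := 0 < N ∧ ∀ k, g (k + N) = g k

/-- `N` is the minimal period of the sequence `g`. -/
def MinPeriod {α : Type*} (g : ℕ → α) (N : ℕ) : Prop :=
  IsPeriod g N ∧ ∀ N', IsPeriod g N' → N ≤ N'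

/-- A 2-face (given by its connection path `g`) is quaternionic if at each of its
vertices the two edges of the face based there form a quaternionic pair. -/
def IsQuatPath (G : Graph) {m : ℕ} {A : Axial G m} (Q : QuatStructure G A)
    (g : ℕ → G.E) : Prop :=
  ∀ k, Q.qpair (g (k + 1)) = G.bar (g k)

/-- A noncomplex triangle: a quaternionic 2-face which is a triangle with labels
`±a, ±λ, ±(λ-a)` and quaternionic weights `±λ, ±(λ-a), ±a` at its three vertices. -/
def IsNoncomplexTriangle (G : Graph) {m : ℕ} {A : Axial G m} (Q : QuatStructure G A)
    (g : ℕ → G.E) : Prop :=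
  MinPeriod g 3 ∧ IsQuatPath G Q g ∧
  ∃ a l : Fin m → ℤ,
    PM (A.label (g 0)) a ∧ PM (A.label (g 1)) l ∧ PM (A.label (g 2)) (l - a) ∧
    PM (Q.lam (G.src (g 0))) l ∧ PM (Q.lam (G.src (g 1))) (l - a) ∧
    PM (Q.lam (G.src (g 2))) a

/-- Hypothesis (H): a GKM₃ graph with quaternionic structure all of whose quaternionic
2-faces are biangles or noncomplex triangles and all of whose complex 2-faces are
triangles or quadrangles. -/
def HypH (G : Graph) {m : ℕ} (A : Axial G m) (Q : QuatStructure G A) : Prop :=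
  A.IsGKM 3 ∧
  ∀ C : Connection G, CompatibleConn G A.label C →
    ∀ e f, G.src f = G.src e → f ≠ e →
      ∀ N, MinPeriod (connPath G C e f) N →
        (IsQuatPath G Q (connPath G C e f) →
          N = 2 ∨ IsNoncomplexTriangle G Q (connPath G C e f)) ∧
        (¬ IsQuatPath G Q (connPath G C e f) → N = 3 ∨ N = 4)

/-- A compatible signed structure on a 2-face with edges `g 0, …, g (N-1)`
(indices mod `N`): lifts `γ k` of the labels `α (g k)` such that consecutive lifts
satisfy the connection congruence and are quaternionically compatible at each vertex. -/
def SignedStructureOn (G : Graph) {m : ℕ} (A : Axial G m) (Q : QuatStructure G A)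
    (g : ℕ → G.E) (N : ℕ) (γ : ℕ → (Fin m → ℤ)) : Prop :=
  (∀ k, γ (k + N) = γ k) ∧
  (∀ k, PM (γ k) (A.label (g k))) ∧
  (∀ k, ∃ c : ℤ, γ (k + 2) + γ k = c • γ (k + 1)) ∧
  (∀ k, ∃ ℓ, QCompat G A.label Q.lam Q.qpair (G.tgt (g k))
      [(G.bar (g k), -(γ k)), (g (k + 1), γ (k + 1))] ℓ)

/-- The raw data of a GKM graph with quaternionic structure: vertices, oriented edges,
labels, quaternionic weights (both as chosen representatives mod sign) and quaternionic
pairs. -/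
structure QData (m : ℕ) where
  V : Type
  E : Type
  src : E → V
  bar : E → E
  label : E → (Fin m → ℤ)
  lam : V → (Fin m → ℤ)
  qpair : E → E

/-- The quaternionic GKM data underlying a GKM graph with quaternionic structure. -/
def toQData (G : Graph) {m : ℕ} (A : Axial G m) (Q : QuatStructure G A) : QData m :=
  ⟨G.V, G.E, G.src, G.bar, A.label, Q.lam, Q.qpair⟩

/-- An isomorphism of GKM graphs with quaternionic structure: bijections of vertices and
oriented edges commuting with `src`, `bar` and the quaternionic pairing, and preserving
the labels and the quaternionic weights up to sign. -/
structure QIso {m : ℕ} (D₁ D₂ : QData m) where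
  vmap : D₁.V ≃ D₂.V
  emap : D₁.E ≃ D₂.E
  src_comm : ∀ e, D₂.src (emap e) = vmap (D₁.src e)
  bar_comm : ∀ e, D₂.bar (emap e) = emap (D₁.bar e)
  label_pm : ∀ e, PM (D₂.label (emap e)) (D₁.label e)
  lam_pm : ∀ v, PM (D₂.lam (vmap v)) (D₁.lam v)
  qpair_comm : ∀ e, D₂.qpair (emap e) = emap (D₁.qpair e)

/-- The model graph `Γ_{ℍP}(λ; β₀, …, β_n)` of a torus action on `ℍPⁿ`: vertices
`0, …, n`, two edges between any two distinct vertices `k, l`, labeled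
`±(β_k - β_l)` and `±(λ - β_k - β_l)`, quaternionic weight `±(λ - 2β_k)` at `k`,
the two edges of each biangle forming a quaternionic pair. -/
def modelHP (n : ℕ) {m : ℕ} (lam₀ : Fin m → ℤ) (β : Fin (n + 1) → (Fin m → ℤ)) :
    QData m where
  V := Fin (n + 1)
  E := {p : Fin (n + 1) × Fin (n + 1) // p.1 ≠ p.2} × Bool
  src e := e.1.1.1
  bar e := (⟨(e.1.1.2, e.1.1.1), Ne.symm e.1.2⟩, e.2)
  label e := if e.2 then lam₀ - β e.1.1.1 - β e.1.1.2 else β e.1.1.1 - β e.1.1.2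
  lam k := lam₀ - (2 : ℤ) • β k
  qpair e := (e.1, !e.2)

/-- The 2-element subset `{i, j}` (`i ≠ j`) realized as a sorted pair. -/
def uPair {n : ℕ} (i j : Fin n) (h : i ≠ j) : {p : Fin n × Fin n // p.1 < p.2} :=
  if hlt : i < j then ⟨(i, j), hlt⟩ else ⟨(j, i), h.lt_or_gt.resolve_left hlt⟩

/-- The model graph `Γ_{Gr}(β₁, …, β_n)` of a torus action on `Gr₂(ℂⁿ)`: vertices the
2-element subsets of `{1, …, n}`; an oriented edge `(i, j, k)` from `{i, j}` to `{i, k}`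
for `j ≠ k`, labeled `±(β_j - β_k)`; quaternionic weight `±(β_i - β_j)` at `{i, j}`;
the edges `(i, j, k)` and `(j, i, k)` forming a quaternionic pair at `{i, j}`. -/
def modelGr (n : ℕ) {m : ℕ} (β : Fin n → (Fin m → ℤ)) : QData m where
  V := {p : Fin n × Fin n // p.1 < p.2}
  E := {t : Fin n × Fin n × Fin n // t.1 ≠ t.2.1 ∧ t.1 ≠ t.2.2 ∧ t.2.1 ≠ t.2.2}
  src e := uPair e.1.1 e.1.2.1 e.2.1
  bar e := ⟨(e.1.1, e.1.2.2, e.1.2.1), e.2.2.1, e.2.1, Ne.symm e.2.2.2⟩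
  label e := β e.1.2.1 - β e.1.2.2
  lam v := β v.1.1 - β v.1.2
  qpair e := ⟨(e.1.2.1, e.1.1, e.1.2.2), Ne.symm e.2.1, e.2.2.2, e.2.2.1⟩

/-- A subgraph (with quaternionic structure) of a GKM graph with quaternionic
structure: sets of vertices and of oriented edges closed under `src`, `bar` and the
quaternionic pairing. -/
structure SubData (G : Graph) {m : ℕ} (A : Axial G m) (Q : QuatStructure G A) where
  W : Set G.V
  F : Set G.E
  src_mem : ∀ e ∈ F, G.src e ∈ W
  bar_mem : ∀ e ∈ F, G.bar e ∈ F
  qpair_mem : ∀ e ∈ F, Q.qpair e ∈ F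

/-- The quaternionic GKM data induced on a subgraph. -/
def SubData.toQData {G : Graph} {m : ℕ} {A : Axial G m} {Q : QuatStructure G A}
    (S : SubData G A Q) : QData m where
  V := S.W
  E := S.F
  src e := ⟨G.src e.1, S.src_mem e.1 e.2⟩
  bar e := ⟨G.bar e.1, S.bar_mem e.1 e.2⟩
  label e := A.label e.1
  lam v := Q.lam v.1
  qpair e := ⟨Q.qpair e.1, S.qpair_mem e.1 e.2⟩

/-!
Transporting quaternionically compatible lifts along the connection path by condition (2)
produces lifts `γ k` of the labels and lifts `ℓ k` of the quaternionic weights with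
`γ (k+2) + γ k ∈ ℤ γ (k+1)` and `ℓ (k+1) - ℓ k ∈ ℤ γ (k+1)`; the only question is whether
`γ` closes up after one period `N`. Since two consecutive lifts determine the rest, it
suffices that `(γ N, γ (N+1)) = (γ 0, γ 1)`. The recursion keeps `(γ k, γ (k+1))` in the
`SL₂(ℤ)`-orbit of `(γ 0, γ 1)`, and `γ N, γ (N+1)` lift the same labels as `γ 0, γ 1`, so
`(γ N, γ (N+1)) = ε (γ 0, γ 1)` for a single sign `ε`. If `ε = -1`, the weight at `t(g 0)`
is forced to change sign, so `2 ℓ 0` lies in the span of `γ 0, γ 1`. But `ℓ 0 = -γ 0 + x`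
with `x` a lift of the label of the quaternionic partner of `ḡ 0`, which on a complex face
is a third edge at that vertex; GKM₃ rules this out.
-/

section Lifts

variable {m : ℕ} {x y z : Fin m → ℤ}

namespace PM

lemma refl (x : Fin m → ℤ) : PM x x := Or.inl rfl

lemma symm (h : PM x y) : PM y x := by
  rcases h with rfl | rfl
  exacts [refl _, Or.inr (neg_neg y).symm]

lemma neg (h : PM x y) : PM (-x) y := by
  rcases h with rfl | rfl
  exacts [Or.inr rfl, Or.inl (neg_neg y)]

lemma exists_unit (h : PM x y) : ∃ u : ℤˣ, x = u • y := by
  rcases h with rfl | rfl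
  exacts [⟨1, (one_smul _ _).symm⟩, ⟨-1, by simp⟩]

lemma units_smul (u : ℤˣ) (x : Fin m → ℤ) : PM (u • x) x := by
  rcases Int.units_eq_one_or u with rfl | rfl
  exacts [Or.inl (one_smul _ _), Or.inr (by simp)]

lemma trans (h₁ : PM x y) (h₂ : PM y z) : PM x z := by
  obtain ⟨u, rfl⟩ := h₁.exists_unit
  obtain ⟨v, rfl⟩ := h₂.exists_unit
  rw [smul_smul]
  exact units_smul _ _

lemma eq_of_sub_eq_smul {a b y' : Fin m → ℤ} (hab : LinearIndependent ℤ ![a, b])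
    (hy : PM y a) (hy' : PM y' a) {c : ℤ} (h : y - y' = c • b) : y = y' := by
  obtain ⟨u, rfl⟩ := hy.exists_unit
  obtain ⟨u', rfl⟩ := hy'.exists_unit
  have hcoef := (LinearIndependent.pair_iff.1 hab ((u : ℤ) - u') (-c)
    (by rw [sub_smul, neg_smul, ← Units.smul_def, ← Units.smul_def, h, add_neg_cancel])).1
  rw [Units.val_inj.1 (sub_eq_zero.1 hcoef)]

lemma eq_of_sub_pm {a b ℓ u u' : Fin m → ℤ} (hab : LinearIndependent ℤ ![a, b])
    (hu : PM u a) (hu' : PM u' a) (hv : PM (ℓ - u) b) (hv' : PM (ℓ - u') b) : u = u' := by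
  obtain ⟨w, hw⟩ := hv.exists_unit
  obtain ⟨w', hw'⟩ := hv'.exists_unit
  refine hu.eq_of_sub_eq_smul hab hu' (c := w' - w) ?_
  rw [sub_smul, ← Units.smul_def, ← Units.smul_def, ← hw, ← hw']
  abel

end PM

lemma _root_.LinearIndependent.of_pm {ι : Type*} {v w : ι → Fin m → ℤ}
    (hv : LinearIndependent ℤ v) (h : ∀ i, PM (w i) (v i)) : LinearIndependent ℤ w := by
  choose u hu using fun i => (h i).exists_unit
  rw [show w = u • v from funext hu]
  exact hv.units_smul u

lemma _root_.LinearIndependent.pm_pair {a b : Fin m → ℤ} (h : LinearIndependent ℤ ![a, b])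
    (hx : PM x a) (hy : PM y b) : LinearIndependent ℤ ![x, y] :=
  h.of_pm (Fin.forall_fin_two.2 ⟨hx, hy⟩)

lemma _root_.LinearIndependent.pm_triple {a b c : Fin m → ℤ}
    (h : LinearIndependent ℤ ![a, b, c]) (hx : PM x a) (hy : PM y b) (hz : PM z c) :
    LinearIndependent ℤ ![x, y, z] :=
  h.of_pm (by simp [Fin.forall_fin_succ, hx, hy, hz])

lemma _root_.LinearIndependent.eq_zero_of_smul_mem_span_pair {R M : Type*} [Ring R]
    [AddCommGroup M] [Module R M] {x y z : M} (h : LinearIndependent R ![x, y, z]) {n : R}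
    (hn : n • x ∈ Submodule.span R {y, z}) : n = 0 := by
  obtain ⟨a, b, hab⟩ := Submodule.mem_span_pair.1 hn
  have := Fintype.linearIndependent_iff.1 h ![n, -a, -b]
    (by simp [Fin.sum_univ_three, ← hab, neg_smul])
  simpa using this 0

lemma linearIndependent_int_of_ratQ {ι : Type*} {v : ι → Fin m → ℤ}
    (h : LinearIndependent ℚ fun i => ratQ (v i)) : LinearIndependent ℤ v :=
  LinearIndependent.of_comp ((Int.castAddHom ℚ).toIntLinearMap.compLeft (Fin m))
    (h.restrict_scalars' ℤ)

end Lifts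

section Graphs

variable {G : Graph} {m : ℕ}

lemma Axial.linearIndependent_pair (A : Axial G m) {e f : G.E} (hf : G.src f = G.src e)
    (hef : e ≠ f) : LinearIndependent ℤ ![A.label e, A.label f] :=
  linearIndependent_int_of_ratQ <| by
    convert A.indep₂ e f hf hef using 1
    ext i : 1
    fin_cases i <;> rfl

lemma Axial.IsGKM.linearIndependent_triple {A : Axial G m} (h₃ : A.IsGKM 3) {v : G.V}
    {a b c : G.E} (ha : G.src a = v) (hb : G.src b = v) (hc : G.src c = v)
    (hab : a ≠ b) (hac : a ≠ c) (hbc : b ≠ c) :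
    LinearIndependent ℤ ![A.label a, A.label b, A.label c] := by
  classical
  have hli := linearIndependent_int_of_ratQ <| h₃ v {a, b, c}
    (by simp [ha, hb, hc])
    (by rw [Finset.card_insert_of_notMem (by simp [hab, hac]), Finset.card_pair hbc])
  have hv : Function.Injective ![a, b, c] := by
    intro i j h
    fin_cases i <;> fin_cases j <;>
      simp_all [hab.symm, hac.symm, hbc.symm]
  have hinj : Function.Injective fun i : Fin 3 =>
      (⟨![a, b, c] i, by fin_cases i <;> simp⟩ : {x // x ∈ ({a, b, c} : Finset G.E)}) :=
    fun i j h => hv (congrArg Subtype.val h)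
  convert hli.comp _ hinj using 1
  ext i : 1
  fin_cases i <;> rfl

lemma Connection.map_inj (C : Connection G) {e f f' : G.E} (hf : G.src f = G.src e)
    (hf' : G.src f' = G.src e) : C.map e f = C.map e f' ↔ f = f' :=
  ⟨fun h => by rw [← C.map_bar e f hf, h, C.map_bar e f' hf'], congrArg _⟩

lemma Connection.map_ne_bar (C : Connection G) {e f : G.E} (hf : G.src f = G.src e)
    (hfe : f ≠ e) : C.map e f ≠ G.bar e := by
  rw [← C.map_self]
  exact (C.map_inj hf rfl).not.2 hfe

lemma CompatibleConn.exists_add_smul_pm {label : G.E → Fin m → ℤ} {C : Connection G}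
    (hC : CompatibleConn G label C) {e f : G.E} (hf : G.src f = G.src e) {x : Fin m → ℤ}
    (hx : PM x (label f)) : ∃ c : ℤ, PM (x + c • label e) (label (C.map e f)) := by
  obtain ⟨x', y, hx', hy, c, rfl⟩ := hC e f hf
  obtain ⟨u, rfl⟩ := (hx.trans hx'.symm).exists_unit
  refine ⟨u * c, ?_⟩
  rw [mul_smul, ← Units.smul_def, ← smul_add]
  exact (PM.units_smul u _).trans hy

lemma CompatibleConn.map_eq {A : Axial G m} (h₃ : A.IsGKM 3) {C₁ C₂ : Connection G}
    (h₁ : CompatibleConn G A.label C₁) (h₂ : CompatibleConn G A.label C₂) {e f : G.E}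
    (hf : G.src f = G.src e) : C₁.map e f = C₂.map e f := by
  by_cases hfe : f = e
  · rw [hfe, C₁.map_self, C₂.map_self]
  by_contra hne
  obtain ⟨c₁, hc₁⟩ := h₁.exists_add_smul_pm hf (PM.refl (A.label f))
  obtain ⟨c₂, hc₂⟩ := h₂.exists_add_smul_pm hf (PM.refl (A.label f))
  have hind := (h₃.linearIndependent_triple (C₁.map_src e f hf) (C₂.map_src e f hf) rfl hne
    (C₁.map_ne_bar hf hfe) (C₂.map_ne_bar hf hfe)).pm_triple hc₁ hc₂ (A.label_bar e).symm
  refine one_ne_zero (hind.eq_zero_of_smul_mem_span_pair (n := (1 : ℤ)) ?_)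
  exact Submodule.mem_span_pair.2 ⟨1, c₁ - c₂, by module⟩

end Graphs

section Quaternionic

variable {G : Graph} {m : ℕ}

section QCompat

variable {label : G.E → Fin m → ℤ} {lam : G.V → Fin m → ℤ} {qpair : G.E → G.E} {v : G.V}
  {s s' : List (G.E × (Fin m → ℤ))} {ℓ : Fin m → ℤ}

lemma QCompat.mono (h : QCompat G label lam qpair v s ℓ) (hs : s' ⊆ s) :
    QCompat G label lam qpair v s' ℓ :=
  let ⟨L, hL, hLs⟩ := h
  ⟨L, hL, fun p hp => hLs p (hs hp)⟩

lemma QCompat.pm {a : G.E} {x : Fin m → ℤ} (h : QCompat G label lam qpair v s ℓ)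
    (hp : (a, x) ∈ s) (ha : G.src a = v) : PM x (label a) := by
  obtain ⟨L, ⟨-, hL⟩, hLs⟩ := h
  have hLa : L a = x := hLs _ hp
  exact hLa ▸ (hL a ha).1

lemma QCompat.neg (h : QCompat G label lam qpair v s ℓ) :
    QCompat G label lam qpair v (s.map fun p => (p.1, -p.2)) (-ℓ) := by
  obtain ⟨L, ⟨hℓ, hL⟩, hLs⟩ := h
  refine ⟨-L, ⟨hℓ.neg, fun e he => ⟨(hL e he).1.neg, ?_⟩⟩, ?_⟩
  · rw [Pi.neg_apply, Pi.neg_apply, ← neg_add, (hL e he).2]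
  · intro p hp
    obtain ⟨q, hq, rfl⟩ := List.mem_map.1 hp
    exact congrArg Neg.neg (hLs q hq)

end QCompat

namespace QuatStructure

variable {A : Axial G m} (Q : QuatStructure G A)

lemma linearIndependent_qpair (e : G.E) :
    LinearIndependent ℤ ![A.label e, A.label (Q.qpair e)] :=
  A.linearIndependent_pair (Q.qpair_src e) (Q.qpair_ne e).symm

lemma exists_qFam {e : G.E} {x : Fin m → ℤ} (hx : PM x (A.label e)) :
    ∃ L ℓ, QFam G A.label Q.lam Q.qpair (G.src e) L ℓ ∧ L e = x := by
  obtain ⟨x₀, y₀, hx₀, hy₀, hsum⟩ := Q.pair_sum e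
  obtain ⟨u, hu⟩ := (hx.trans hx₀.symm).exists_unit
  set ℓ := u • (x₀ + y₀)
  have hℓ : PM ℓ (Q.lam (G.src e)) := (PM.units_smul u _).trans hsum
  have hsplit : ∀ e', G.src e' = G.src e →
      ∃ y, PM y (A.label e') ∧ PM (ℓ - y) (A.label (Q.qpair e')) := by
    intro e' he'
    obtain ⟨x', y', hx', hy', hsum'⟩ := Q.pair_sum e'
    obtain ⟨w, hw⟩ := (hℓ.trans (he' ▸ hsum').symm).exists_unit
    refine ⟨w • x', (PM.units_smul w _).trans hx', ?_⟩
    rw [hw, smul_add, add_sub_cancel_left]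
    exact (PM.units_smul w _).trans hy'
  choose! L hL using hsplit
  have hunique : ∀ e', G.src e' = G.src e → ∀ y, PM y (A.label e') →
      PM (ℓ - y) (A.label (Q.qpair e')) → L e' = y := fun e' he' y hy hy' =>
    PM.eq_of_sub_pm (Q.linearIndependent_qpair e') (hL e' he').1 hy (hL e' he').2 hy'
  refine ⟨L, ℓ, ⟨hℓ, fun e' he' => ⟨(hL e' he').1, ?_⟩⟩, ?_⟩
  · have hq : G.src (Q.qpair e') = G.src e := (Q.qpair_src e').trans he'
    rw [hunique _ hq (ℓ - L e') (hL e' he').2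
      (by simpa [Q.qpair_invol] using (hL e' he').1)]
    abel
  · refine hunique e rfl x hx ?_
    rw [show ℓ - x = u • y₀ from (sub_eq_of_eq_add' (by rw [hu, ← smul_add]))]
    exact (PM.units_smul u _).trans hy₀

lemma weight_eq {v : G.V} {a : G.E} {x ℓ ℓ' : Fin m → ℤ} (ha : G.src a = v)
    (h : QCompat G A.label Q.lam Q.qpair v [(a, x)] ℓ)
    (h' : QCompat G A.label Q.lam Q.qpair v [(a, x)] ℓ') : ℓ = ℓ' := by
  obtain ⟨L, ⟨hℓ, hL⟩, hLa⟩ := h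
  obtain ⟨L', ⟨hℓ', hL'⟩, hLa'⟩ := h'
  simp only [List.mem_singleton, forall_eq] at hLa hLa'
  have hqa : G.src (Q.qpair a) = v := (Q.qpair_src a).trans ha
  rcases hℓ.trans hℓ'.symm with h | hneg
  · exact h
  exfalso
  have hx : PM x (A.label a) := hLa ▸ (hL a ha).1
  -- `x + (ℓ - x)` and `-x + (ℓ + x)` would be two splittings of `ℓ` into lifts of the labels
  -- of `a` and `qpair a`
  have hxx : x = -x := by
    refine PM.eq_of_sub_pm (ℓ := ℓ) (Q.linearIndependent_qpair a) hx hx.neg ?_ ?_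
    · rw [show ℓ - x = L (Q.qpair a) by rw [← (hL a ha).2, hLa]; abel]
      exact (hL _ hqa).1
    · rw [show ℓ - -x = -L' (Q.qpair a) by rw [hneg, ← (hL' a ha).2, hLa']; abel]
      exact (hL' _ hqa).1.neg
  have hx0 : x = 0 := self_eq_neg.1 hxx
  exact (Q.linearIndependent_qpair a).ne_zero 0 <| by
    simpa [hx0, PM, eq_comm] using hx

/-- `ℓ - x` lifts the label of `qpair a`, a third edge at `v`. -/
lemma eq_zero_of_smul_weight_mem_span (h₃ : A.IsGKM 3) {v : G.V} {a b : G.E}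
    {x y ℓ : Fin m → ℤ} (ha : G.src a = v) (hb : G.src b = v) (hab : a ≠ b)
    (hq : Q.qpair a ≠ b) (h : QCompat G A.label Q.lam Q.qpair v [(a, x), (b, y)] ℓ) {n : ℤ}
    (hn : n • ℓ ∈ Submodule.span ℤ {x, y}) : n = 0 := by
  obtain ⟨L, ⟨-, hL⟩, hLs⟩ := h
  have hLa : L a = x := hLs (a, x) (by simp)
  have hLb : L b = y := hLs (b, y) (by simp)
  have hqa : G.src (Q.qpair a) = v := (Q.qpair_src a).trans ha
  have hind := (h₃.linearIndependent_triple hqa ha hb (Q.qpair_ne a) hq hab).pm_triple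
    (hL _ hqa).1 (hLa ▸ (hL a ha).1) (hLb ▸ (hL b hb).1)
  refine hind.eq_zero_of_smul_mem_span_pair ?_
  have hℓ : ℓ = x + L (Q.qpair a) := by rw [← hLa, (hL a ha).2]
  rw [show n • L (Q.qpair a) = n • ℓ - n • x by rw [hℓ]; module]
  exact sub_mem hn (Submodule.smul_mem _ _ (Submodule.subset_span (by simp)))

lemma map_qpair (h₃ : A.IsGKM 3) {C : Connection G} (hC : CompatibleConn G A.label C)
    {e f : G.E} (hf : G.src f = G.src e) : C.map e (Q.qpair f) = Q.qpair (C.map e f) := by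
  obtain ⟨C', hC', hcomm, -⟩ := Q.cond₂
  rw [hC.map_eq h₃ hC' ((Q.qpair_src f).trans hf), hC.map_eq h₃ hC' hf, hcomm e f hf]

/-- Condition (2), restated for any compatible connection (under GKM₃ they all agree). -/
lemma exists_transport (h₃ : A.IsGKM 3) {C : Connection G} (hC : CompatibleConn G A.label C)
    {e f : G.E} (hf : G.src f = G.src e) {xe xf ℓ : Fin m → ℤ}
    (h : QCompat G A.label Q.lam Q.qpair (G.src e) [(e, xe), (f, xf)] ℓ) :
    ∃ c c' : ℤ, QCompat G A.label Q.lam Q.qpair (G.tgt e)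
      [(G.bar e, -xe), (C.map e f, xf + c • A.label e)] (ℓ + c' • A.label e) := by
  obtain ⟨C', hC', -, hcond⟩ := Q.cond₂
  rw [hC.map_eq h₃ hC' hf]
  obtain ⟨ℓ', ⟨c', rfl⟩, -, htransport⟩ := hcond e xe ℓ (h.mono (by simp))
  obtain ⟨c, hc⟩ := hC'.exists_add_smul_pm hf (h.pm (x := xf) (by simp) hf)
  exact ⟨c, c', htransport f hf xf h _ hc ⟨c, rfl⟩⟩

end QuatStructure

end Quaternionic

section ConnectionPath

variable {G : Graph} {m : ℕ} (C : Connection G) {e f : G.E}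

lemma connPath_add_two (k : ℕ) :
    connPath G C e f (k + 2) = C.map (connPath G C e f (k + 1)) (G.bar (connPath G C e f k)) :=
  rfl

lemma connPath_src_succ (hf : G.src f = G.src e) (k : ℕ) :
    G.src (connPath G C e f (k + 1)) = G.tgt (connPath G C e f k) := by
  induction k with
  | zero => exact C.map_src e f hf
  | succ k ih => exact C.map_src _ _ ih.symm

lemma connPath_succ_ne_bar (hf : G.src f = G.src e) (hfe : f ≠ e) (k : ℕ) :
    connPath G C e f (k + 1) ≠ G.bar (connPath G C e f k) := by
  induction k with
  | zero => exact C.map_ne_bar hf hfe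
  | succ k ih => exact C.map_ne_bar (connPath_src_succ C hf k).symm (Ne.symm ih)

lemma isQuatPath_connPath {A : Axial G m} (Q : QuatStructure G A) (h₃ : A.IsGKM 3)
    (hC : CompatibleConn G A.label C) (h : Q.qpair (connPath G C e f 1) = G.bar e) :
    IsQuatPath G Q (connPath G C e f) := by
  intro k
  induction k with
  | zero => exact h
  | succ k ih =>
    rw [connPath_add_two, ← ih, Q.map_qpair h₃ hC rfl, C.map_self, Q.qpair_invol]

end ConnectionPath

section Recurrence

variable {V : Type*} [AddCommGroup V] {γ ℓ : ℕ → V}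

lemma exists_sl2_coords (hrec : ∀ k, ∃ c : ℤ, γ (k + 2) + γ k = c • γ (k + 1)) (k : ℕ) :
    ∃ a b c d : ℤ, γ k = a • γ 0 + b • γ 1 ∧ γ (k + 1) = c • γ 0 + d • γ 1 ∧
      a * d - b * c = 1 := by
  induction k with
  | zero => exact ⟨1, 0, 0, 1, by simp, by simp, by ring⟩
  | succ k ih =>
    obtain ⟨a, b, c, d, hk, hk₁, hdet⟩ := ih
    obtain ⟨n, hn⟩ := hrec k
    refine ⟨c, d, n * c - a, n * d - b, hk₁, ?_, by linear_combination hdet⟩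
    rw [eq_sub_of_add_eq hn, hk, hk₁]
    module

lemma sub_mem_span_of_rec (hrec : ∀ k, ∃ c : ℤ, γ (k + 2) + γ k = c • γ (k + 1))
    (hℓ : ∀ k, ∃ c : ℤ, ℓ (k + 1) = ℓ k + c • γ (k + 1)) (k : ℕ) :
    ℓ k - ℓ 0 ∈ Submodule.span ℤ {γ 0, γ 1} := by
  induction k with
  | zero => simp
  | succ k ih =>
    obtain ⟨c, hc⟩ := hℓ k
    obtain ⟨-, -, a, b, -, hk₁, -⟩ := exists_sl2_coords hrec k
    rw [hc, add_sub_right_comm]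
    exact add_mem ih (Submodule.smul_mem _ _ (Submodule.mem_span_pair.2 ⟨a, b, hk₁.symm⟩))

lemma units_eq_of_rec (hind : LinearIndependent ℤ ![γ 0, γ 1])
    (hrec : ∀ k, ∃ c : ℤ, γ (k + 2) + γ k = c • γ (k + 1)) {N : ℕ} {u u' : ℤˣ}
    (hN : γ N = u • γ 0) (hN₁ : γ (N + 1) = u' • γ 1) : u = u' := by
  obtain ⟨a, b, c, d, hk, hk₁, hdet⟩ := exists_sl2_coords hrec N
  obtain ⟨ha, hb⟩ := LinearIndependent.pair_iff.1 hind (a - u) b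
    (by rw [sub_smul, ← Units.smul_def, ← hN, hk]; abel)
  obtain ⟨hc, hd⟩ := LinearIndependent.pair_iff.1 hind c (d - u')
    (by rw [sub_smul, ← Units.smul_def, ← hN₁, hk₁]; abel)
  rw [hb, hc, sub_eq_zero.1 ha, sub_eq_zero.1 hd, mul_zero, sub_zero, ← Units.val_mul,
    Units.val_eq_one, mul_eq_one_iff_eq_inv, Int.units_inv_eq_self] at hdet
  exact hdet

end Recurrence

lemma exists_seq_of_step {α : Type*} {P : ℕ → α → Prop} {R : ℕ → α → α → Prop} {a : α}
    (h₀ : P 0 a) (hstep : ∀ k x, P k x → ∃ y, R k x y ∧ P (k + 1) y) :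
    ∃ s : ℕ → α, ∀ k, P k (s k) ∧ R k (s k) (s (k + 1)) := by
  choose! next hnext using hstep
  let s : ℕ → α := fun k => Nat.rec a next k
  have hs : ∀ k, P k (s k) := fun k => by
    induction k with
    | zero => exact h₀
    | succ k ih => exact (hnext k _ ih).2
  exact ⟨s, fun k => ⟨hs k, (hnext k _ (hs k)).1⟩⟩

section FaceLifts

variable {G : Graph} {m : ℕ} {A : Axial G m} {Q : QuatStructure G A} {g : ℕ → G.E}
  {γ ℓ : ℕ → Fin m → ℤ}

def QuatCompatAt (Q : QuatStructure G A) (g : ℕ → G.E) (γ ℓ : ℕ → Fin m → ℤ) (k : ℕ) :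
    Prop :=
  QCompat G A.label Q.lam Q.qpair (G.tgt (g k))
    [(G.bar (g k), -γ k), (g (k + 1), γ (k + 1))] (ℓ k)

lemma QuatCompatAt.pm {k : ℕ} (h : QuatCompatAt Q g γ ℓ k) : PM (γ k) (A.label (g k)) := by
  have hbar := (QCompat.pm (a := G.bar (g k)) (x := -γ k) h (by simp) rfl).neg
  rw [neg_neg] at hbar
  exact hbar.trans (A.label_bar _)

lemma linearIndependent_consecutive (hsrc : ∀ k, G.src (g (k + 1)) = G.tgt (g k))
    (hnb : ∀ k, g (k + 1) ≠ G.bar (g k)) (hpm : ∀ k, PM (γ k) (A.label (g k))) (k : ℕ) :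
    LinearIndependent ℤ ![γ k, γ (k + 1)] :=
  (A.linearIndependent_pair (hsrc k) (hnb k).symm).pm_pair
    ((hpm k).trans (A.label_bar _).symm) (hpm (k + 1))

lemma periodic_of_eq_of_eq (hsrc : ∀ k, G.src (g (k + 1)) = G.tgt (g k))
    (hnb : ∀ k, g (k + 1) ≠ G.bar (g k)) {N : ℕ} (hg : ∀ k, g (k + N) = g k)
    (hpm : ∀ k, PM (γ k) (A.label (g k)))
    (hrec : ∀ k, ∃ c : ℤ, γ (k + 2) + γ k = c • γ (k + 1))
    (h₀ : γ N = γ 0) (h₁ : γ (N + 1) = γ 1) (k : ℕ) : γ (k + N) = γ k := by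
  suffices ∀ k, γ (k + N) = γ k ∧ γ (k + 1 + N) = γ (k + 1) from (this k).1
  intro k
  induction k with
  | zero => simpa [add_comm 1 N] using ⟨h₀, h₁⟩
  | succ k ih =>
    refine ⟨ih.2, ?_⟩
    obtain ⟨c, hc⟩ := hrec (k + N)
    obtain ⟨c', hc'⟩ := hrec k
    have hind := LinearIndependent.pair_symm_iff.1
      (linearIndependent_consecutive hsrc hnb hpm (k + 1))
    refine PM.eq_of_sub_eq_smul hind ?_ (PM.refl _) (c := c - c') ?_
    · exact (hpm _).trans (hg (k + 1 + 1) ▸ (hpm _).symm)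
    · rw [show k + 1 + 1 + N = k + N + 2 by ring, eq_sub_of_add_eq hc, eq_sub_of_add_eq hc',
        show k + N + 1 = k + 1 + N by ring, ih.1, ih.2, sub_smul]
      abel

lemma QuatCompatAt.not_neg_of_complex (h₃ : A.IsGKM 3) (hsrc : G.src (g 1) = G.tgt (g 0))
    (hnb : g 1 ≠ G.bar (g 0)) (hcx : Q.qpair (g 1) ≠ G.bar (g 0)) {N : ℕ}
    (hg₀ : g N = g 0) (hg₁ : g (N + 1) = g 1)
    (hrec : ∀ k, ∃ c : ℤ, γ (k + 2) + γ k = c • γ (k + 1))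
    (hℓ : ∀ k, ∃ c : ℤ, ℓ (k + 1) = ℓ k + c • γ (k + 1))
    (h₀ : QuatCompatAt Q g γ ℓ 0) (hN : QuatCompatAt Q g γ ℓ N) (hγ₀ : γ N = -γ 0) :
    γ (N + 1) ≠ -γ 1 := by
  intro hγ₁
  have hN' : QCompat G A.label Q.lam Q.qpair (G.tgt (g 0))
      [(G.bar (g 0), γ 0), (g 1, -γ 1)] (ℓ N) := by
    simpa only [QuatCompatAt, hg₀, hg₁, hγ₀, hγ₁, neg_neg] using hN
  have h₀' : QCompat G A.label Q.lam Q.qpair (G.tgt (g 0))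
      [(G.bar (g 0), γ 0), (g 1, -γ 1)] (-ℓ 0) := by
    simpa only [List.map_cons, List.map_nil, neg_neg] using h₀.neg
  have hℓN : ℓ N = -ℓ 0 :=
    Q.weight_eq (a := G.bar (g 0)) (x := γ 0) rfl (hN'.mono (by simp)) (h₀'.mono (by simp))
  have hspan : Submodule.span ℤ {γ 0, γ 1} ≤ Submodule.span ℤ {-γ 0, γ 1} :=
    Submodule.span_le.2 <| Set.insert_subset_iff.2
      ⟨Submodule.mem_span_pair.2 ⟨-1, 0, by simp⟩,
        Set.singleton_subset_iff.2 (Submodule.mem_span_pair.2 ⟨0, 1, by simp⟩)⟩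
  have hmem : (-2 : ℤ) • ℓ 0 ∈ Submodule.span ℤ {-γ 0, γ 1} := by
    refine hspan ?_
    convert sub_mem_span_of_rec hrec hℓ N using 1
    rw [hℓN]
    module
  have hq : Q.qpair (G.bar (g 0)) ≠ g 1 := fun h => hcx (by rw [← h, Q.qpair_invol])
  have := Q.eq_zero_of_smul_weight_mem_span h₃ rfl hsrc (Ne.symm hnb) hq h₀ hmem
  norm_num at this

lemma QuatCompatAt.periodic (h₃ : A.IsGKM 3) (hsrc : ∀ k, G.src (g (k + 1)) = G.tgt (g k))
    (hnb : ∀ k, g (k + 1) ≠ G.bar (g k)) (hcx : Q.qpair (g 1) ≠ G.bar (g 0)) {N : ℕ}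
    (hg : ∀ k, g (k + N) = g k) (hγ : ∀ k, QuatCompatAt Q g γ ℓ k)
    (hrec : ∀ k, ∃ c : ℤ, γ (k + 2) + γ k = c • γ (k + 1))
    (hℓ : ∀ k, ∃ c : ℤ, ℓ (k + 1) = ℓ k + c • γ (k + 1)) (k : ℕ) : γ (k + N) = γ k := by
  have hpm k := (hγ k).pm
  have hg₀ : g N = g 0 := by simpa using hg 0
  have hg₁ : g (N + 1) = g 1 := by simpa [add_comm] using hg 1
  obtain ⟨u, hu⟩ := ((hpm N).trans (hg₀ ▸ (hpm 0).symm)).exists_unit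
  obtain ⟨u', hu'⟩ := ((hpm (N + 1)).trans (hg₁ ▸ (hpm 1).symm)).exists_unit
  obtain rfl := units_eq_of_rec (linearIndependent_consecutive hsrc hnb hpm 0) hrec hu hu'
  rcases Int.units_eq_one_or u with rfl | rfl
  · exact periodic_of_eq_of_eq hsrc hnb hg hpm hrec (by simpa using hu) (by simpa using hu') k
  · exact absurd (by simpa using hu') <| (hγ 0).not_neg_of_complex h₃ (hsrc 0) (hnb 0) hcx
      hg₀ hg₁ hrec hℓ (hγ N) (by simpa using hu)

end FaceLifts

lemma exists_quatCompat_step {G : Graph} {m : ℕ} {A : Axial G m} (Q : QuatStructure G A)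
    (h₃ : A.IsGKM 3) {C : Connection G} (hC : CompatibleConn G A.label C) {e f : G.E}
    (hf : G.src f = G.src e) {k : ℕ} {x y l : Fin m → ℤ}
    (h : QCompat G A.label Q.lam Q.qpair (G.tgt (connPath G C e f k))
      [(G.bar (connPath G C e f k), -x), (connPath G C e f (k + 1), y)] l) :
    ∃ z l' : Fin m → ℤ, (∃ c : ℤ, z + x = c • y) ∧ (∃ c : ℤ, l' = l + c • y) ∧
      QCompat G A.label Q.lam Q.qpair (G.tgt (connPath G C e f (k + 1)))
        [(G.bar (connPath G C e f (k + 1)), -y), (connPath G C e f (k + 2), z)] l' := by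
  have hsrc := connPath_src_succ C hf k
  obtain ⟨w, hw⟩ := (h.pm (x := y) (by simp) hsrc).symm.exists_unit
  obtain ⟨c, c', h'⟩ := Q.exists_transport h₃ hC hsrc.symm (xe := y) (xf := -x)
    (by rw [hsrc]; exact h.mono (by simp))
  refine ⟨_, _, ⟨c * w, ?_⟩, ⟨c' * w, ?_⟩, h'⟩
  · rw [hw, Units.smul_def, smul_smul]
    abel
  · rw [hw, Units.smul_def, smul_smul]

lemma exists_quatCompat_lifts {G : Graph} {m : ℕ} {A : Axial G m} (Q : QuatStructure G A)
    (h₃ : A.IsGKM 3) {C : Connection G} (hC : CompatibleConn G A.label C) {e f : G.E}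
    (hf : G.src f = G.src e) :
    ∃ γ ℓ : ℕ → Fin m → ℤ, ∀ k, QuatCompatAt Q (connPath G C e f) γ ℓ k ∧
      (∃ c : ℤ, γ (k + 2) + γ k = c • γ (k + 1)) ∧
      ∃ c : ℤ, ℓ (k + 1) = ℓ k + c • γ (k + 1) := by
  set g := connPath G C e f
  obtain ⟨L, ℓ, hL, hLe⟩ := Q.exists_qFam (PM.refl (A.label e))
  obtain ⟨c, c', h₀⟩ := Q.exists_transport h₃ hC hf (xe := A.label e) (xf := L f)
    ⟨L, hL, by simp [hLe]⟩
  -- the state at step `k` is `(γ k, γ (k+1), ℓ k)`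
  obtain ⟨s, hs⟩ := exists_seq_of_step
    (P := fun k (x : (Fin m → ℤ) × (Fin m → ℤ) × (Fin m → ℤ)) =>
      QCompat G A.label Q.lam Q.qpair (G.tgt (g k))
        [(G.bar (g k), -x.1), (g (k + 1), x.2.1)] x.2.2)
    (R := fun _ x y => y.1 = x.2.1 ∧ (∃ c : ℤ, y.2.1 + x.1 = c • x.2.1) ∧
      ∃ c : ℤ, y.2.2 = x.2.2 + c • x.2.1)
    (a := (A.label e, L f + c • A.label e, ℓ + c' • A.label e)) h₀
    fun _ _ h =>
      let ⟨z, l', hz, hl', h'⟩ := exists_quatCompat_step Q h₃ hC hf h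
      ⟨(_, z, l'), ⟨rfl, hz, hl'⟩, h'⟩
  have hlink k : (s (k + 1)).1 = (s k).2.1 := (hs k).2.1
  refine ⟨fun k => (s k).1, fun k => (s k).2.2, fun k => ⟨?_, ?_, ?_⟩⟩
  · simpa only [QuatCompatAt, hlink] using (hs k).1
  · simpa only [hlink] using (hs k).2.2.1
  · simpa only [hlink] using (hs k).2.2.2

/-- Every complex 2-face of a GKM₃ graph with a quaternionic structure admits a signed
structure compatible with the quaternionic structure. -/
theorem complex_face_signed_structure (G : Graph) {m : ℕ} (A : Axial G m)
    (h₃ : A.IsGKM 3) (Q : QuatStructure G A)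
    (C : Connection G) (hC : CompatibleConn G A.label C)
    (e f : G.E) (hf : G.src f = G.src e) (hef : f ≠ e)
    (N : ℕ) (hN : MinPeriod (connPath G C e f) N)
    (hcx : ¬ IsQuatPath G Q (connPath G C e f)) :
    ∃ γ : ℕ → (Fin m → ℤ), SignedStructureOn G A Q (connPath G C e f) N γ := by
  have hcx₀ : Q.qpair (connPath G C e f 1) ≠ G.bar (connPath G C e f 0) :=
    fun h => hcx (isQuatPath_connPath C Q h₃ hC h)
  obtain ⟨γ, ℓ, hγ⟩ := exists_quatCompat_lifts Q h₃ hC hf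
  refine ⟨γ, ?_, fun k => (hγ k).1.pm, fun k => (hγ k).2.1, fun k => ⟨ℓ k, (hγ k).1⟩⟩
  exact QuatCompatAt.periodic h₃ (connPath_src_succ C hf) (connPath_succ_ne_bar C hf hef) hcx₀
    hN.1.2 (fun k => (hγ k).1) (fun k => (hγ k).2.1) (fun k => (hγ k).2.2)

end GKMQ
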